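/- For a traceless Hermitian operator H, the operator norm satisfies ‖H‖_∞ ≤ ‖H‖₁/2. -/

import Mathlib

open Matrix ComplexOrder

/-- The trace norm `‖A‖₁ = Tr √(AᴴA)` of a complex matrix. -/
noncomputable def traceNorm {d : ℕ} (A : Matrix (Fin d) (Fin d) ℂ) : ℝ :=
  (((Matrix.posSemidef_conjTranspose_mul_self A).1.eigenvectorUnitary : Matrix (Fin d) (Fin d) ℂ) *
    diagonal (((↑) : ℝ → ℂ) ∘ (√·) ∘ (Matrix.posSemidef_conjTranspose_mul_self A).1.eigenvalues) *
    (star (Matrix.posSemidef_conjTranspose_mul_self A).1.eigenvectorUnitary :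
      Matrix (Fin d) (Fin d) ℂ)).trace.re

/-- The operator (spectral) norm `‖A‖_∞` of a complex matrix. -/
noncomputable def opNorm {d : ℕ} (A : Matrix (Fin d) (Fin d) ℂ) : ℝ :=
  ‖Matrix.toEuclideanCLM (𝕜 := ℂ) A‖

/-!
For Hermitian `H` with eigenvalues `λᵢ`, `‖H‖_∞ = maxᵢ |λᵢ|` and `‖H‖₁ = ∑ᵢ |λᵢ|`, while
`Tr H = ∑ᵢ λᵢ = 0`. A real sequence with zero sum has `|λᵢ| = |∑_{j ≠ i} λⱼ| ≤ ∑_{j ≠ i} |λⱼ|`,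
so each `|λᵢ|` is at most half of `∑ⱼ |λⱼ|`.
-/

theorem abs_le_half_sum_abs_of_sum_eq_zero {ι : Type*} [Fintype ι] {f : ι → ℝ}
    (hf : ∑ j, f j = 0) (i : ι) : |f i| ≤ (∑ j, |f j|) / 2 := by
  classical
  have hrest : ∑ j ∈ Finset.univ.erase i, f j = -f i := by
    rw [← Finset.add_sum_erase _ _ (Finset.mem_univ i)] at hf
    linarith
  have hle := Finset.abs_sum_le_sum_abs f (Finset.univ.erase i)
  rw [hrest, abs_neg] at hle
  rw [← Finset.add_sum_erase _ _ (Finset.mem_univ i)]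
  linarith

theorem Matrix.IsHermitian.trace_cfc {𝕜 n : Type*} [RCLike 𝕜] [Fintype n] [DecidableEq n]
    {A : Matrix n n 𝕜} (hA : A.IsHermitian) (f : ℝ → ℝ) :
    (cfc f A).trace = ∑ i, (f (hA.eigenvalues i) : 𝕜) := by
  rw [hA.cfc_eq, IsHermitian.cfc, Unitary.conjStarAlgAut_apply, trace_mul_cycle,
    Unitary.coe_star_mul_self, one_mul, trace_diagonal]
  rfl

theorem traceNorm_eq_re_trace_cfc_sqrt {d : ℕ} (A : Matrix (Fin d) (Fin d) ℂ) :
    traceNorm A = (cfc Real.sqrt (Aᴴ * A)).trace.re := by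
  rw [(posSemidef_conjTranspose_mul_self A).1.cfc_eq]
  rfl

theorem Matrix.IsHermitian.traceNorm_eq_sum_abs_eigenvalues {d : ℕ}
    {A : Matrix (Fin d) (Fin d) ℂ} (hA : A.IsHermitian) :
    traceNorm A = ∑ i, |hA.eigenvalues i| := by
  rw [traceNorm_eq_re_trace_cfc_sqrt, hA.eq, ← sq,
    ← cfc_comp_pow Real.sqrt 2 A (ha := hA.isSelfAdjoint), hA.trace_cfc, Complex.re_sum]
  simp [Real.sqrt_sq_eq_abs]

open scoped Matrix.Norms.L2Operator in
/-- In the C⋆-algebra of matrices, the norm of a self-adjoint element is its spectral radius. -/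
theorem Matrix.IsHermitian.l2_opNorm_le_of_forall_abs_eigenvalues_le {n : Type*} [Fintype n]
    [DecidableEq n] {A : Matrix n n ℂ} (hA : A.IsHermitian) {c : ℝ} (hc : 0 ≤ c)
    (h : ∀ i, |hA.eigenvalues i| ≤ c) : ‖A‖ ≤ c := by
  rw [← hA.isSelfAdjoint.toReal_spectralRadius_eq_norm, spectralRadius,
    hA.spectrum_real_eq_range_eigenvalues]
  refine ENNReal.toReal_le_of_le_ofReal hc (iSup₂_le ?_)
  rintro _ ⟨i, rfl⟩
  rw [← enorm_eq_nnnorm, ← ofReal_norm]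
  exact ENNReal.ofReal_le_ofReal (h i)

open scoped Matrix.Norms.L2Operator in
theorem opNorm_eq_l2_opNorm {d : ℕ} (A : Matrix (Fin d) (Fin d) ℂ) : opNorm A = ‖A‖ := rfl

/-- For a traceless Hermitian operator `H`, `‖H‖_∞ ≤ ‖H‖₁ / 2`. -/
theorem opNorm_le_half_traceNorm {d : ℕ}
    (H : Matrix (Fin d) (Fin d) ℂ)
    (hHerm : Hᴴ = H) (htr : H.trace = 0) :
    opNorm H ≤ traceNorm H / 2 := by
  have hH : H.IsHermitian := hHerm
  have hsum : ∑ i, hH.eigenvalues i = 0 := by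
    have htrace := hH.trace_eq_sum_eigenvalues
    rwa [htr, ← RCLike.ofReal_sum, eq_comm, RCLike.ofReal_eq_zero] at htrace
  rw [opNorm_eq_l2_opNorm, hH.traceNorm_eq_sum_abs_eigenvalues]
  exact hH.l2_opNorm_le_of_forall_abs_eigenvalues_le (by positivity)
    (abs_le_half_sum_abs_of_sum_eq_zero hsum)
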